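/- arXiv:2008.11441 — 2 statements merged into one kernel-verified Lean document; each statement's English description precedes it below -/
import Mathlib

section
/- Let A_1, …, A_m ∈ ℝ^{n×n}, let d ≥ 1 be an integer, and let γ ≥ 0. If there exists a homogeneous polynomial p ∈ ℝ[x_1,…,x_n] of degree 2d such that p(x) − (x_1² + ⋯ + x_n²)^d is SOS and γ^{2d} p(x) − p(A_i x) is SOS for every i = 1,…,m, then ρ(𝒜) ≤ γ. -/
/-!
The form `p` is a Lyapunov function for the family: evaluating the two SOS certificates gives
`‖x‖^{2d} ≤ p(x)` and `p(Aᵢx) ≤ γ^{2d} p(x)`, while homogeneity and compactness of the unit sphere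
give `p(x) ≤ (c‖x‖)^{2d}`. Chaining these along a product of length `k` yields
`‖A_σ x‖ ≤ c γ^k ‖x‖`, and `(c γ^k)^{1/k} → γ`.
-/

open MvPolynomial Filter

/-- Operator norm of a real matrix induced by the Euclidean norm on `ℝ^n`. -/
noncomputable def opNorm {n : ℕ} (A : Matrix (Fin n) (Fin n) ℝ) : ℝ :=
  ‖LinearMap.toContinuousLinearMap (Matrix.toEuclideanLin A)‖

/-- Joint spectral radius of a family of matrices. -/
noncomputable def jsr {n m : ℕ} (A : Fin m → Matrix (Fin n) (Fin n) ℝ) : ℝ :=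
  Filter.limsup
    (fun k : ℕ => ⨆ σ : Fin k → Fin m,
      opNorm ((List.ofFn fun j => A (σ j)).prod) ^ (1 / (k : ℝ)))
    Filter.atTop

/-- The polynomial `p(Ax)`, obtained by substituting the linear forms `(Ax)_i` for `x_i`. -/
noncomputable def polyComp {n : ℕ} (p : MvPolynomial (Fin n) ℝ)
    (A : Matrix (Fin n) (Fin n) ℝ) : MvPolynomial (Fin n) ℝ :=
  MvPolynomial.aeval (fun i => ∑ j, MvPolynomial.C (A i j) * MvPolynomial.X j) p

/-- `f` is a sum of squares of homogeneous polynomials of degree `d`. -/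
def IsSOSdeg {n : ℕ} (f : MvPolynomial (Fin n) ℝ) (d : ℕ) : Prop :=
  ∃ (t : ℕ) (g : Fin t → MvPolynomial (Fin n) ℝ),
    (∀ i, (g i).IsHomogeneous d) ∧ f = ∑ i, (g i) ^ 2

open WithLp Matrix

lemma MvPolynomial.IsHomogeneous.eval_smul {R σ : Type*} [CommSemiring R]
    {p : MvPolynomial σ R} {k : ℕ} (hp : p.IsHomogeneous k) (c : R) (x : σ → R) :
    eval (c • x) p = c ^ k * eval x p := by
  rw [eval_eq, eval_eq, Finset.mul_sum]
  refine Finset.sum_congr rfl fun e he => ?_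
  have hdeg : e.degree = k := by
    by_contra hne
    exact (mem_support_iff.mp he) (hp.coeff_eq_zero hne)
  calc coeff e p * ∏ i ∈ e.support, (c • x) i ^ e i
      = coeff e p * ((∏ i ∈ e.support, c ^ e i) * ∏ i ∈ e.support, x i ^ e i) := by
        simp only [Pi.smul_apply, smul_eq_mul, mul_pow, Finset.prod_mul_distrib]
    _ = c ^ k * (coeff e p * ∏ i ∈ e.support, x i ^ e i) := by
        rw [Finset.prod_pow_eq_pow_sum, ← hdeg, Finsupp.degree_apply]
        ring

lemma eval_polyComp {n : ℕ} (p : MvPolynomial (Fin n) ℝ) (A : Matrix (Fin n) (Fin n) ℝ)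
    (x : Fin n → ℝ) : eval x (polyComp p A) = eval (A *ᵥ x) p := by
  rw [polyComp, aeval_def, eval_eval₂]
  have hC : (eval x).comp (algebraMap ℝ (MvPolynomial (Fin n) ℝ)) = RingHom.id ℝ := by
    ext r; simp
  have hX : (fun i => eval x (∑ j, C (A i j) * X j)) = A *ᵥ x := by
    funext i
    simp [Matrix.mulVec, dotProduct]
  rw [hC, eval₂_id, hX]

lemma eval_sum_X_sq_pow {n : ℕ} (x : Fin n → ℝ) (d : ℕ) :
    eval x ((∑ j, X j ^ 2) ^ d) = ‖toLp 2 x‖ ^ (2 * d) := by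
  simp [pow_mul, EuclideanSpace.real_norm_sq_eq]

lemma IsSOSdeg.eval_nonneg {n d : ℕ} {f : MvPolynomial (Fin n) ℝ} (hf : IsSOSdeg f d)
    (x : Fin n → ℝ) : 0 ≤ eval x f := by
  obtain ⟨t, g, -, rfl⟩ := hf
  simp only [map_sum, map_pow]
  positivity

lemma exists_le_mul_norm_pow_of_homogeneous {E : Type*} [NormedAddCommGroup E]
    [NormedSpace ℝ E] [ProperSpace E] {f : E → ℝ} (hf : Continuous f) {k : ℕ} (hk : k ≠ 0)
    (hhom : ∀ c : ℝ, 0 ≤ c → ∀ x, f (c • x) = c ^ k * f x) :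
    ∃ c > 0, ∀ x, f x ≤ (c * ‖x‖) ^ k := by
  obtain ⟨C, hC⟩ := (isCompact_sphere (0 : E) 1).exists_bound_of_continuousOn hf.continuousOn
  refine ⟨max C 1, by positivity, fun x => ?_⟩
  rcases eq_or_ne x 0 with rfl | hx
  · have h0 := hhom 0 le_rfl 0
    rw [smul_zero, zero_pow hk, zero_mul] at h0
    rw [h0]
    positivity
  have hu : ‖x‖⁻¹ • x ∈ Metric.sphere (0 : E) 1 := by
    simp [norm_smul, hx]
  have hfu : f (‖x‖⁻¹ • x) ≤ max C 1 ^ k :=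
    calc f (‖x‖⁻¹ • x) ≤ C := (le_abs_self _).trans (hC _ hu)
      _ ≤ max C 1 := le_max_left _ _
      _ ≤ max C 1 ^ k := le_self_pow₀ (le_max_right _ _) hk
  calc f x = ‖x‖ ^ k * f (‖x‖⁻¹ • x) := by
        rw [← hhom _ (norm_nonneg x), smul_inv_smul₀ (norm_ne_zero_iff.mpr hx)]
    _ ≤ ‖x‖ ^ k * max C 1 ^ k := by gcongr
    _ = (max C 1 * ‖x‖) ^ k := by ring

lemma apply_list_prod_mulVec_le {ι : Type*} [Fintype ι] [DecidableEq ι] (V : (ι → ℝ) → ℝ) {r : ℝ}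
    (hr : 0 ≤ r) {l : List (Matrix ι ι ℝ)} (h : ∀ M ∈ l, ∀ x, V (M *ᵥ x) ≤ r * V x)
    (x : ι → ℝ) : V (l.prod *ᵥ x) ≤ r ^ l.length * V x := by
  induction l with
  | nil => simp
  | cons M l ih =>
    rw [List.prod_cons, ← Matrix.mulVec_mulVec, List.length_cons, pow_succ']
    calc V (M *ᵥ (l.prod *ᵥ x)) ≤ r * V (l.prod *ᵥ x) := h M (by simp) _
      _ ≤ r * (r ^ l.length * V x) := by
          gcongr
          exact ih fun N hN => h N (List.mem_cons_of_mem M hN)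
      _ = r * r ^ l.length * V x := by ring

lemma opNorm_le_of_norm_mulVec_le {n : ℕ} {M : Matrix (Fin n) (Fin n) ℝ} {K : ℝ} (hK : 0 ≤ K)
    (h : ∀ x : Fin n → ℝ, ‖toLp 2 (M *ᵥ x)‖ ≤ K * ‖toLp 2 x‖) : opNorm M ≤ K :=
  ContinuousLinearMap.opNorm_le_bound _ hK fun y => h (ofLp y)

lemma jsr_le_of_opNorm_prod_le {n m : ℕ} (A : Fin m → Matrix (Fin n) (Fin n) ℝ) {γ c : ℝ}
    (hγ : 0 ≤ γ) (hc : 0 < c)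
    (h : ∀ k (σ : Fin k → Fin m), opNorm (List.ofFn fun j => A (σ j)).prod ≤ c * γ ^ k) :
    jsr A ≤ γ := by
  set u : ℕ → ℝ := fun k => ⨆ σ : Fin k → Fin m,
    opNorm ((List.ofFn fun j => A (σ j)).prod) ^ (1 / (k : ℝ))
  set g : ℕ → ℝ := fun k => c ^ (1 / (k : ℝ)) * γ
  have hg : Tendsto g atTop (nhds γ) := by
    have h1 := ((Real.continuousAt_const_rpow hc.ne').tendsto.comp
      tendsto_one_div_atTop_nhds_zero_nat).mul_const γ
    simpa [g, Function.comp_def] using h1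
  have hug : ∀ᶠ k in atTop, u k ≤ g k := by
    filter_upwards [eventually_ge_atTop 1] with k hk
    have hk0 : (k : ℝ) ≠ 0 := by positivity
    refine Real.iSup_le (fun σ => ?_) (by positivity)
    calc opNorm ((List.ofFn fun j => A (σ j)).prod) ^ (1 / (k : ℝ))
        ≤ (c * γ ^ k) ^ (1 / (k : ℝ)) :=
          Real.rpow_le_rpow (norm_nonneg _) (h k σ) (by positivity)
      _ = g k := by
          rw [Real.mul_rpow hc.le (by positivity), ← Real.rpow_natCast γ k,
            ← Real.rpow_mul hγ, mul_one_div_cancel hk0, Real.rpow_one]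
  have hu_nonneg : ∀ k, 0 ≤ u k := fun k =>
    Real.iSup_nonneg fun σ => Real.rpow_nonneg (norm_nonneg _) _
  calc jsr A = limsup u atTop := rfl
    _ ≤ limsup g atTop := limsup_le_limsup hug
        (isCoboundedUnder_le_of_eventually_le atTop (Eventually.of_forall hu_nonneg))
        hg.isBoundedUnder_le
    _ = γ := hg.limsup_eq

/-- If there is a form `p` of degree `2d` with `p(x) - ‖x‖₂^{2d}` SOS and
`γ^{2d} p(x) - p(Aᵢx)` SOS for every `i`, then `ρ(𝒜) ≤ γ`. -/
theorem stmt2 {n m : ℕ} (A : Fin m → Matrix (Fin n) (Fin n) ℝ) (d : ℕ) (hd : 1 ≤ d)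
    (γ : ℝ) (hγ : 0 ≤ γ)
    (h : ∃ p : MvPolynomial (Fin n) ℝ, p.IsHomogeneous (2 * d) ∧
      IsSOSdeg (p - (∑ j, MvPolynomial.X j ^ 2) ^ d) d ∧
      ∀ i, IsSOSdeg (γ ^ (2 * d) • p - polyComp p (A i)) d) :
    jsr A ≤ γ := by
  obtain ⟨p, hp, hlower, hstep⟩ := h
  have h2d : 2 * d ≠ 0 := by omega
  have hnorm_le : ∀ x, ‖toLp 2 x‖ ^ (2 * d) ≤ eval x p := fun x => by
    simpa [eval_sum_X_sq_pow] using hlower.eval_nonneg x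
  have hcontract : ∀ i, ∀ x, eval (A i *ᵥ x) p ≤ γ ^ (2 * d) * eval x p := fun i x => by
    simpa [eval_polyComp] using (hstep i).eval_nonneg x
  obtain ⟨c, hc, hupper⟩ := exists_le_mul_norm_pow_of_homogeneous
    (f := fun y : EuclideanSpace ℝ (Fin n) => eval (ofLp y) p)
    ((continuous_eval p).comp (PiLp.continuous_ofLp 2 _)) h2d fun t _ y => hp.eval_smul t _
  refine jsr_le_of_opNorm_prod_le A hγ hc fun k σ =>
    opNorm_le_of_norm_mulVec_le (by positivity) fun x => ?_
  refine (pow_le_pow_iff_left₀ (norm_nonneg _) (by positivity) h2d).mp ?_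
  calc ‖toLp 2 ((List.ofFn fun j => A (σ j)).prod *ᵥ x)‖ ^ (2 * d)
      ≤ eval ((List.ofFn fun j => A (σ j)).prod *ᵥ x) p := hnorm_le _
    _ ≤ (γ ^ (2 * d)) ^ k * eval x p := by
        simpa using apply_list_prod_mulVec_le (fun x => eval x p) (r := γ ^ (2 * d)) (by positivity)
          (l := List.ofFn fun j => A (σ j)) (by simpa using fun j => hcontract (σ j)) x
    _ ≤ (γ ^ (2 * d)) ^ k * (c * ‖toLp 2 x‖) ^ (2 * d) := by
        gcongr
        exact hupper (toLp 2 x)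
    _ = (c * γ ^ k * ‖toLp 2 x‖) ^ (2 * d) := by ring
end

section
/- Let B = {β_1, …, β_r} ⊆ ℕ^n be a finite set of exponent vectors, let Ḡ be a chordal graph on {1,…,r} with maximal cliques C_1, …, C_t, and set B_k := {β_i : i ∈ C_k} for k = 1,…,t. For a polynomial f ∈ ℝ[x_1,…,x_n], the following are equivalent: (i) there exists a symmetric positive semidefinite matrix Q ∈ ℝ^{r×r} with Q_{uv} = 0 whenever u ≠ v and {u,v} is not an edge of Ḡ, such that f = Σ_{u,v=1}^{r} Q_{uv} x^{β_u + β_v}; (ii) there exist symmetric positive semidefinite matrices Q_k of size |C_k| (k = 1,…,t) such that f = Σ_{k=1}^t (x^{B_k})ᵀ Q_k x^{B_k}. -/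
open MvPolynomial

/-- A chord of a closed walk: an edge of `G` joining two vertices of the walk that is not
an edge of the walk itself (hence joins two nonconsecutive nodes when the walk is a cycle). -/
def HasChord {V : Type*} (G : SimpleGraph V) {v : V} (w : G.Walk v v) : Prop :=
  ∃ u₁ u₂ : V, u₁ ∈ w.support ∧ u₂ ∈ w.support ∧ G.Adj u₁ u₂ ∧ s(u₁, u₂) ∉ w.edges

/-- A graph is chordal if every cycle of length at least four has a chord. -/
def IsChordal {V : Type*} (G : SimpleGraph V) : Prop :=
  ∀ (v : V) (w : G.Walk v v), w.IsCycle → 4 ≤ w.length → HasChord G w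

/-- `C` is a maximal clique of `G`. -/
def IsMaxClique' {V : Type*} (G : SimpleGraph V) (C : Finset V) : Prop :=
  G.IsClique (C : Set V) ∧ ∀ D : Finset V, G.IsClique (D : Set V) → C ⊆ D → D = C

/-!
By Dirac's lemma, every induced subgraph of a chordal graph has a simplicial vertex: a minimal
separator of two nonadjacent vertices is a clique (two nonadjacent vertices of it would be joined by
shortest paths through both sides, forming a chordless cycle of length at least four), and
induction on each side together with the separator produces a simplicial vertex there.

Eliminating a simplicial vertex `v` from a positive semidefinite `Q` with sparsity pattern `Ḡ`
splits `Q` into the rank-one matrix `Q eᵥ eᵥᵀ Q / Qᵥᵥ`, supported on the clique formed by `v` and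
its neighbours, and its Schur complement, which is positive semidefinite, has the same pattern and
vanishes on row `v`. Induction writes `Q` as a sum of positive semidefinite matrices supported on
maximal cliques. As `(x^B)ᵀ Q x^B` is linear in `Q`, this gives (i) ⇒ (ii); conversely, padding the
`Q_k` with zeros and summing gives a Gram matrix with pattern `Ḡ`.
-/

namespace SimpleGraph

variable {V : Type*} {G H : SimpleGraph V}

def restrict (G : SimpleGraph V) (S : Finset V) : SimpleGraph V where
  Adj u v := u ∈ S ∧ v ∈ S ∧ G.Adj u v
  symm := ⟨fun _ _ h => ⟨h.2.1, h.1, h.2.2.symm⟩⟩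
  loopless := ⟨fun _ h => h.2.2.ne rfl⟩

@[simp]
lemma restrict_adj {S : Finset V} {u v : V} :
    (G.restrict S).Adj u v ↔ u ∈ S ∧ v ∈ S ∧ G.Adj u v :=
  Iff.rfl

lemma restrict_le (S : Finset V) : G.restrict S ≤ G := fun _ _ h => h.2.2

lemma restrict_mono {S S' : Finset V} (h : S ⊆ S') : G.restrict S ≤ G.restrict S' :=
  fun _ _ hadj => restrict_adj.mpr ⟨h hadj.1, h hadj.2.1, hadj.2.2⟩

lemma Walk.mem_of_adj_closed {A : Set V} (hA : ∀ ⦃u v⦄, H.Adj u v → u ∈ A → v ∈ A)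
    {u v : V} (p : H.Walk u v) (hu : u ∈ A) : ∀ z ∈ p.support, z ∈ A := by
  induction p with
  | nil => simpa using hu
  | cons h p ih =>
    simp only [Walk.support_cons, List.mem_cons, forall_eq_or_imp]
    exact ⟨hu, ih (hA h hu)⟩

lemma Walk.reachable_restrict {S : Finset V} {u v : V} (p : G.Walk u v)
    (hp : ∀ z ∈ p.support, z ∈ S) : (G.restrict S).Reachable u v := by
  induction p with
  | nil => rfl
  | cons h p ih =>
    simp only [Walk.support_cons, List.mem_cons, forall_eq_or_imp] at hp
    exact (restrict_adj.mpr ⟨hp.1, hp.2 _ p.start_mem_support, h⟩).reachable.trans (ih hp.2)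

lemma Walk.two_le_length_of_not_adj {u v : V} (huv : u ≠ v) (hadj : ¬G.Adj u v) (p : G.Walk u v) :
    2 ≤ p.length := by
  by_contra! h
  obtain h | h : p.length = 0 ∨ p.length = 1 := by omega
  · exact huv (eq_of_length_eq_zero h)
  · exact hadj (adj_of_length_eq_one h)

lemma Walk.isChordless_of_length_eq_dist {u v : V} {p : G.Walk u v}
    (hp : p.length = G.dist u v) : p.IsChordless := by
  rw [isChordless_iff_forall_mem_edges]
  intro a b ha hb hab
  obtain ⟨i, rfl, hi⟩ := mem_support_iff_exists_getVert.mp ha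
  obtain ⟨j, rfl, hj⟩ := mem_support_iff_exists_getVert.mp hb
  clear ha hb
  wlog hij : i ≤ j generalizing i j
  · rw [Sym2.eq_swap]; exact this j hj i hi hab.symm (by omega)
  have hlt : i < j := lt_of_le_of_ne hij fun h => hab.ne (by rw [h])
  -- shortcutting `p` along the edge `ab` gives a walk of length `i + 1 + (length - j)`
  have hshort := G.dist_le ((p.take i).append (cons hab (p.drop j)))
  simp only [length_append, take_length, length_cons, drop_length] at hshort
  have hji : j = i + 1 := by omega
  subst hji
  exact (mk_mem_edges_iff_exists p).mpr ⟨i, by omega, rfl⟩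

open Classical in
noncomputable def componentIn (G : SimpleGraph V) (T : Finset V) (c : V) : Finset V :=
  T.filter ((G.restrict T).Reachable c)

lemma mem_componentIn {T : Finset V} {c z : V} :
    z ∈ G.componentIn T c ↔ z ∈ T ∧ (G.restrict T).Reachable c z := by
  classical
  simp [componentIn]

lemma self_mem_componentIn {T : Finset V} {c : V} (hc : c ∈ T) : c ∈ G.componentIn T c :=
  mem_componentIn.mpr ⟨hc, .rfl⟩

lemma mem_componentIn_of_adj {T : Finset V} {c u z : V} (hadj : (G.restrict T).Adj u z)
    (hu : u ∈ G.componentIn T c) : z ∈ G.componentIn T c :=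
  mem_componentIn.mpr ⟨hadj.2.1, (mem_componentIn.mp hu).2.trans hadj.reachable⟩

lemma reachable_restrict_componentIn {T : Finset V} {c u u' : V}
    (hu : u ∈ G.componentIn T c) (hu' : u' ∈ G.componentIn T c) :
    (G.restrict (G.componentIn T c)).Reachable u u' := by
  obtain ⟨p⟩ := (mem_componentIn.mp hu).2.symm.trans (mem_componentIn.mp hu').2
  refine (p.mapLe (restrict_le T)).reachable_restrict fun z hz => ?_
  rw [Walk.support_mapLe_eq_support] at hz
  exact p.mem_of_adj_closed (fun _ _ hadj h => mem_componentIn_of_adj hadj h) hu z hz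

lemma reachable_of_mem_componentIn_of_mem_componentIn {T : Finset V} {a b z : V}
    (ha : z ∈ G.componentIn T a) (hb : z ∈ G.componentIn T b) : (G.restrict T).Reachable a b :=
  (mem_componentIn.mp ha).2.trans (mem_componentIn.mp hb).2.symm

lemma reachable_of_adj_of_mem_componentIn {T : Finset V} {a b u w : V}
    (hu : u ∈ G.componentIn T a) (hw : w ∈ G.componentIn T b) (hadj : G.Adj u w) :
    (G.restrict T).Reachable a b :=
  (mem_componentIn.mp hu).2.trans <|
    (restrict_adj.mpr ⟨(mem_componentIn.mp hu).1, (mem_componentIn.mp hw).1, hadj⟩).reachable.trans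
      (mem_componentIn.mp hw).2.symm

lemma exists_adj_mem_componentIn [DecidableEq V] {T : Finset V} {a b x : V} (ha : a ∈ T)
    (hsep : ¬ (G.restrict T).Reachable a b) (hreach : (G.restrict (insert x T)).Reachable a b) :
    ∃ u ∈ G.componentIn T a, G.Adj x u := by
  by_contra! hx
  obtain ⟨p⟩ := hreach
  have hclosed : ∀ ⦃u v⦄, (G.restrict (insert x T)).Adj u v →
      u ∈ G.componentIn T a → v ∈ G.componentIn T a := by
    rintro u v ⟨-, hv, huv⟩ hu
    rcases Finset.mem_insert.mp hv with rfl | hvT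
    · exact absurd huv.symm (hx u hu)
    · exact mem_componentIn_of_adj ⟨(mem_componentIn.mp hu).1, hvT, huv⟩ hu
  exact hsep (mem_componentIn.mp <|
    p.mem_of_adj_closed hclosed (self_mem_componentIn ha) b p.end_mem_support).2

lemma Reachable.exists_isPath_isChordless_of_restrict {W : Finset V} {x y : V} (hx : x ∈ W)
    (h : (G.restrict W).Reachable x y) :
    ∃ p : G.Walk x y, p.IsPath ∧ p.IsChordless ∧ ∀ z ∈ p.support, z ∈ W := by
  obtain ⟨p, hpath, hdist⟩ := h.exists_path_of_dist
  have hW : ∀ z ∈ p.support, z ∈ W :=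
    p.mem_of_adj_closed (fun _ _ hadj _ => (restrict_adj.mp hadj).2.1) hx
  refine ⟨p.mapLe (restrict_le W), hpath.mapLe _, ?_, by simpa [Walk.support_mapLe_eq_support]⟩
  rw [Walk.isChordless_iff_forall_mem_edges, Walk.support_mapLe_eq_support,
    Walk.edges_mapLe_eq_edges]
  exact fun a b ha hb hab =>
    (Walk.isChordless_of_length_eq_dist hdist).mem_edges ha hb ⟨hW a ha, hW b hb, hab⟩

/-- `P` followed by `Q` reversed would be a chordless cycle of length at least four. -/
theorem _root_.IsChordal.false_of_chordless_paths (hG : IsChordal G) {x y : V} (hne : x ≠ y)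
    (hxy : ¬ G.Adj x y) {P Q : G.Walk x y} (hP : P.IsPath) (hQ : Q.IsPath)
    (hPc : P.IsChordless) (hQc : Q.IsChordless)
    (hmeet : ∀ z ∈ P.support, z ∈ Q.support → z = x ∨ z = y)
    (hcross : ∀ u ∈ P.support, ∀ w ∈ Q.support, G.Adj u w → u ∈ Q.support ∨ w ∈ P.support) :
    False := by
  have hPlen := Walk.two_le_length_of_not_adj hne hxy P
  have hQlen := Walk.two_le_length_of_not_adj hne hxy Q
  have hdisj : P.support.tail.Disjoint Q.reverse.support.tail := by
    intro z hzP hzQ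
    have start_notMem {a b : V} {p : G.Walk a b} (hp : p.IsPath) : a ∉ p.support.tail := by
      have := hp.support_nodup
      rw [← p.cons_tail_support, List.nodup_cons] at this
      exact this.1
    have hzx : z ≠ x := fun h => start_notMem hP (h ▸ hzP)
    have hzy : z ≠ y := fun h => start_notMem hQ.reverse (h ▸ hzQ)
    rcases hmeet z (List.mem_of_mem_tail hzP)
      (by simpa using List.mem_of_mem_tail hzQ) with h | h
    exacts [hzx h, hzy h]
  have hcyc := hP.isCycle_append hQ.reverse hdisj (Or.inl (by omega))
  obtain ⟨u₁, u₂, h₁, h₂, hadj, hnot⟩ :=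
    hG x _ hcyc (by simp only [Walk.length_append, Walk.length_reverse]; omega)
  simp only [Walk.mem_support_append_iff, Walk.support_reverse, List.mem_reverse] at h₁ h₂
  simp only [Walk.edges_append, Walk.edges_reverse, List.mem_append, List.mem_reverse,
    not_or] at hnot
  have hboth : (u₁ ∈ P.support ∧ u₂ ∈ P.support) ∨ (u₁ ∈ Q.support ∧ u₂ ∈ Q.support) := by
    rcases h₁ with h₁ | h₁ <;> rcases h₂ with h₂ | h₂
    · exact .inl ⟨h₁, h₂⟩
    · rcases hcross u₁ h₁ u₂ h₂ hadj with h | h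
      exacts [.inr ⟨h, h₂⟩, .inl ⟨h₁, h⟩]
    · rcases hcross u₂ h₂ u₁ h₁ hadj.symm with h | h
      exacts [.inr ⟨h₁, h⟩, .inl ⟨h, h₂⟩]
    · exact .inr ⟨h₁, h₂⟩
  rcases hboth with ⟨h₁, h₂⟩ | ⟨h₁, h₂⟩
  exacts [hnot.1 (hPc.mem_edges h₁ h₂ hadj), hnot.2 (hQc.mem_edges h₁ h₂ hadj)]

lemma exists_isPath_isChordless_through_componentIn [DecidableEq V] {T : Finset V} {c x y u u' : V}
    (hu : u ∈ G.componentIn T c) (hu' : u' ∈ G.componentIn T c)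
    (hxu : G.Adj x u) (hyu' : G.Adj y u') :
    ∃ p : G.Walk x y, p.IsPath ∧ p.IsChordless ∧
      ∀ z ∈ p.support, z = x ∨ z = y ∨ z ∈ G.componentIn T c := by
  set W := insert x (insert y (G.componentIn T c))
  have hsub : G.componentIn T c ⊆ W :=
    (Finset.subset_insert _ _).trans (Finset.subset_insert _ _)
  have hxW : x ∈ W := Finset.mem_insert_self _ _
  have hyW : y ∈ W := Finset.mem_insert_of_mem (Finset.mem_insert_self _ _)
  have hreach : (G.restrict W).Reachable x y :=
    (restrict_adj.mpr ⟨hxW, hsub hu, hxu⟩).reachable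
      |>.trans ((reachable_restrict_componentIn hu hu').mono (restrict_mono hsub))
      |>.trans (restrict_adj.mpr ⟨hsub hu', hyW, hyu'.symm⟩).reachable
  obtain ⟨p, hp, hpc, hpW⟩ := hreach.exists_isPath_isChordless_of_restrict hxW
  exact ⟨p, hp, hpc, fun z hz => by simpa [W] using hpW z hz⟩

theorem _root_.IsChordal.isClique_of_minimal_separator [DecidableEq V] (hG : IsChordal G)
    {S X : Finset V} {a b : V} (hX : X ⊆ S) (ha : a ∈ S \ X) (hb : b ∈ S \ X)
    (hsep : ¬ (G.restrict (S \ X)).Reachable a b)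
    (hmin : ∀ x ∈ X, (G.restrict (S \ X.erase x)).Reachable a b) :
    G.IsClique (X : Set V) := by
  intro x hx y hy hne
  by_contra hxy
  set T := S \ X
  have neighbours : ∀ z ∈ X, (∃ u ∈ G.componentIn T a, G.Adj z u) ∧
      ∃ u ∈ G.componentIn T b, G.Adj z u := fun z hz => by
    have hreach := hmin z hz
    rw [Finset.sdiff_erase (hX hz)] at hreach
    exact ⟨exists_adj_mem_componentIn ha hsep hreach,
      exists_adj_mem_componentIn hb (fun h => hsep h.symm) hreach.symm⟩
  obtain ⟨⟨ua, hua, hxua⟩, ub, hub, hxub⟩ := neighbours x hx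
  obtain ⟨⟨ua', hua', hyua'⟩, ub', hub', hyub'⟩ := neighbours y hy
  obtain ⟨P, hP, hPc, hPsupp⟩ := exists_isPath_isChordless_through_componentIn hua hua' hxua hyua'
  obtain ⟨Q, hQ, hQc, hQsupp⟩ := exists_isPath_isChordless_through_componentIn hub hub' hxub hyub'
  refine hG.false_of_chordless_paths hne hxy hP hQ hPc hQc (fun z hzP hzQ => ?_) ?_
  · rcases hPsupp z hzP with h | h | hzA
    · exact .inl h
    · exact .inr h
    rcases hQsupp z hzQ with h | h | hzB
    · exact .inl h
    · exact .inr h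
    exact absurd (reachable_of_mem_componentIn_of_mem_componentIn hzA hzB) hsep
  · intro u hu w hw huw
    rcases hPsupp u hu with rfl | rfl | huA
    · exact .inl Q.start_mem_support
    · exact .inl Q.end_mem_support
    rcases hQsupp w hw with rfl | rfl | hwB
    · exact .inr P.start_mem_support
    · exact .inr P.end_mem_support
    exact absurd (reachable_of_adj_of_mem_componentIn huA hwB huw) hsep

lemma exists_minimal_separator [DecidableEq V] {S : Finset V} {a b : V} (ha : a ∈ S) (hb : b ∈ S)
    (hab : a ≠ b) (hadj : ¬ G.Adj a b) :
    ∃ X ⊆ S, a ∉ X ∧ b ∉ X ∧ ¬ (G.restrict (S \ X)).Reachable a b ∧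
      ∀ x ∈ X, (G.restrict (S \ X.erase x)).Reachable a b := by
  classical
  set F := (S \ {a, b}).powerset.filter fun X => ¬ (G.restrict (S \ X)).Reachable a b
  have hF : S \ {a, b} ∈ F := by
    refine Finset.mem_filter.mpr ⟨Finset.mem_powerset_self _, fun ⟨p⟩ => ?_⟩
    -- only `a` and `b` survive, and they are not adjacent
    have hclosed : ∀ ⦃u v⦄, (G.restrict (S \ (S \ {a, b}))).Adj u v → u ∈ ({a} : Set V) →
        v ∈ ({a} : Set V) := by
      rintro u v ⟨-, hv, huv⟩ rfl
      simp only [Finset.mem_sdiff, Finset.mem_insert, Finset.mem_singleton] at hv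
      obtain rfl | rfl : v = u ∨ v = b := by tauto
      exacts [absurd huv (G.loopless.irrefl _), absurd huv hadj]
    exact hab (p.mem_of_adj_closed hclosed rfl b p.end_mem_support).symm
  obtain ⟨X, hXF, hXmin⟩ := F.exists_min_image Finset.card ⟨_, hF⟩
  obtain ⟨hXsub, hsep⟩ := Finset.mem_filter.mp hXF
  rw [Finset.mem_powerset, Finset.subset_sdiff, Finset.disjoint_insert_right,
    Finset.disjoint_singleton_right] at hXsub
  refine ⟨X, hXsub.1, hXsub.2.1, hXsub.2.2, hsep, fun x hx => ?_⟩
  by_contra hre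
  have hle := hXmin (X.erase x) (Finset.mem_filter.mpr ⟨Finset.mem_powerset.mpr
    ((Finset.erase_subset _ _).trans (Finset.mem_powerset.mp (Finset.mem_filter.mp hXF).1)), hre⟩)
  exact (Finset.card_erase_lt_of_mem hx).not_ge hle

def IsSimplicial (G : SimpleGraph V) (S : Finset V) (v : V) : Prop :=
  v ∈ S ∧ G.IsClique {u | u ∈ S ∧ G.Adj v u}

lemma isSimplicial_of_isClique {S : Finset V} {v : V} (hS : G.IsClique (S : Set V))
    (hv : v ∈ S) : G.IsSimplicial S v :=
  ⟨hv, hS.subset fun _ hu => hu.1⟩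

lemma IsSimplicial.of_subset {S S' : Finset V} {v : V} (hv : G.IsSimplicial S' v) (hS : S' ⊆ S)
    (hnbr : ∀ u ∈ S, G.Adj v u → u ∈ S') : G.IsSimplicial S v := by
  refine ⟨hS hv.1, hv.2.subset ?_⟩
  rintro u ⟨hu, hvu⟩
  exact ⟨hnbr u hu hvu, hvu⟩

def HasSimplicialPairs (G : SimpleGraph V) (S : Finset V) : Prop :=
  ∀ a ∈ S, ∀ b ∈ S, a ≠ b → ¬ G.Adj a b →
    ∃ v w, v ≠ w ∧ ¬ G.Adj v w ∧ G.IsSimplicial S v ∧ G.IsSimplicial S w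

lemma HasSimplicialPairs.exists_isSimplicial_notMem {S X : Finset V} {c : V}
    (hS : G.HasSimplicialPairs S) (hX : G.IsClique (X : Set V)) (hc : c ∈ S) (hcX : c ∉ X) :
    ∃ v, v ∉ X ∧ G.IsSimplicial S v := by
  by_cases hcl : G.IsClique (S : Set V)
  · exact ⟨c, hcX, isSimplicial_of_isClique hcl hc⟩
  obtain ⟨a, ha, b, hb, hab, hnadj⟩ : ∃ a ∈ S, ∃ b ∈ S, a ≠ b ∧ ¬ G.Adj a b := by
    simpa [IsClique, Set.Pairwise] using hcl
  obtain ⟨v, w, hvw, hnadj', hv, hw⟩ := hS a ha b hb hab hnadj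
  by_cases hvX : v ∈ X
  · exact ⟨w, fun hwX => hnadj' (hX hvX hwX hvw), hw⟩
  · exact ⟨v, hvX, hv⟩

/-- Dirac's lemma. -/
theorem _root_.IsChordal.hasSimplicialPairs [DecidableEq V] (hG : IsChordal G) (S : Finset V) :
    G.HasSimplicialPairs S := by
  induction S using Finset.strongInduction with | H S ih =>
  intro a ha b hb hab hadj
  obtain ⟨X, hXS, haX, hbX, hsep, hmin⟩ := exists_minimal_separator ha hb hab hadj
  have haT : a ∈ S \ X := Finset.mem_sdiff.mpr ⟨ha, haX⟩
  have hbT : b ∈ S \ X := Finset.mem_sdiff.mpr ⟨hb, hbX⟩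
  have hX := hG.isClique_of_minimal_separator hXS haT hbT hsep hmin
  -- each side of the separator carries a simplicial vertex of `S`, found by induction
  -- in the side together with `X`
  have side : ∀ c d, c ∈ S \ X → d ∈ S \ X → ¬ (G.restrict (S \ X)).Reachable c d →
      ∃ v ∈ G.componentIn (S \ X) c, G.IsSimplicial S v := by
    intro c d hc hd hcd
    set A := G.componentIn (S \ X) c
    have hAS : A ∪ X ⊆ S := Finset.union_subset
      (fun z hz => (Finset.mem_sdiff.mp (mem_componentIn.mp hz).1).1) hXS
    have hdA : d ∉ A ∪ X := by
      simp only [Finset.mem_union, not_or]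
      exact ⟨fun h => hcd (mem_componentIn.mp h).2, (Finset.mem_sdiff.mp hd).2⟩
    have hlt : A ∪ X ⊂ S := Finset.ssubset_iff_subset_ne.mpr
      ⟨hAS, fun h => hdA (h ▸ (Finset.mem_sdiff.mp hd).1)⟩
    obtain ⟨v, hvX, hv⟩ := (ih _ hlt).exists_isSimplicial_notMem hX
      (Finset.mem_union_left _ (self_mem_componentIn hc)) (Finset.mem_sdiff.mp hc).2
    have hvA : v ∈ A := (Finset.mem_union.mp hv.1).resolve_right hvX
    refine ⟨v, hvA, hv.of_subset hAS fun u hu hvu => ?_⟩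
    by_cases huX : u ∈ X
    · exact Finset.mem_union_right _ huX
    · exact Finset.mem_union_left _
        (mem_componentIn_of_adj (restrict_adj.mpr
          ⟨(mem_componentIn.mp hvA).1, Finset.mem_sdiff.mpr ⟨hu, huX⟩, hvu⟩) hvA)
  obtain ⟨v, hvA, hv⟩ := side a b haT hbT hsep
  obtain ⟨w, hwB, hw⟩ := side b a hbT haT fun h => hsep h.symm
  refine ⟨v, w, ?_, fun hvw => hsep (reachable_of_adj_of_mem_componentIn hvA hwB hvw), hv, hw⟩
  rintro rfl
  exact hsep (reachable_of_mem_componentIn_of_mem_componentIn hvA hwB)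

theorem _root_.IsChordal.exists_isSimplicial [DecidableEq V] (hG : IsChordal G) {S : Finset V}
    (hS : S.Nonempty) : ∃ v, G.IsSimplicial S v := by
  obtain ⟨c, hc⟩ := hS
  obtain ⟨v, -, hv⟩ := (hG.hasSimplicialPairs S).exists_isSimplicial_notMem
    (X := ∅) (by simp) hc (Finset.notMem_empty c)
  exact ⟨v, hv⟩

end SimpleGraph

open Matrix

open scoped ComplexOrder in
lemma Matrix.PosSemidef.apply_eq_zero_of_diag_eq_zero {𝕜 n : Type*} [RCLike 𝕜] [Fintype n]
    [DecidableEq n] {A : Matrix n n 𝕜} (hA : A.PosSemidef) {v : n} (hv : A v v = 0) (u : n) :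
    A u v = 0 := by
  have h := (hA.dotProduct_mulVec_zero_iff (Pi.single v 1)).mp (by simpa [mulVec_single])
  simpa [mulVec_single] using congrFun h u

section Pivot

variable {V : Type*}

/-- `Q eᵥ eᵥᵀ Q / Qᵥᵥ`; it is `0` when `Qᵥᵥ = 0`, and then row `v` of a positive semidefinite `Q`
vanishes anyway. -/
noncomputable def pivotRankOne (Q : Matrix V V ℝ) (v : V) : Matrix V V ℝ :=
  (Q v v)⁻¹ • vecMulVec (fun u => Q u v) (fun u => Q u v)

lemma pivotRankOne_apply (Q : Matrix V V ℝ) (v u w : V) :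
    pivotRankOne Q v u w = (Q v v)⁻¹ * (Q u v * Q w v) :=
  rfl

variable [Fintype V]

lemma posSemidef_pivotRankOne {Q : Matrix V V ℝ} (hQ : Q.PosSemidef) (v : V) :
    (pivotRankOne Q v).PosSemidef :=
  (posSemidef_vecMulVec_self_star (fun u => Q u v)).smul (inv_nonneg.mpr hQ.diag_nonneg)

lemma Matrix.PosSemidef.sub_pivotRankOne [DecidableEq V] {Q : Matrix V V ℝ} (hQ : Q.PosSemidef)
    (v : V) : (Q - pivotRankOne Q v).PosSemidef := by
  refine .of_dotProduct_mulVec_nonneg (hQ.1.sub (posSemidef_pivotRankOne hQ v).1) fun x => ?_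
  set c : V → ℝ := fun u => Q u v
  set d := Q v v
  set s := c ⬝ᵥ x
  have hPx : pivotRankOne Q v *ᵥ x = (d⁻¹ * s) • c := by
    rw [pivotRankOne, smul_mulVec, vecMulVec_mulVec]
    ext u; simp [c, s, d, mul_assoc]
  have hQv : Q *ᵥ Pi.single v 1 = c := by ext u; simp [mulVec_single, c]
  have hvQ : Pi.single v 1 ⬝ᵥ (Q *ᵥ x) = s := by
    rw [single_dotProduct, one_mul]
    refine Finset.sum_congr rfl fun w _ => ?_
    simp only [c, ← hQ.1.apply v w, star_trivial]
  -- the quadratic form of the Schur complement at `x` is that of `Q` at `x - (s / d) eᵥ`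
  have key : x ⬝ᵥ ((Q - pivotRankOne Q v) *ᵥ x) =
      (x - (s / d) • Pi.single v 1) ⬝ᵥ (Q *ᵥ (x - (s / d) • Pi.single v 1)) := by
    have hvc : Pi.single v 1 ⬝ᵥ c = d := by simp [c, d]
    simp only [sub_mulVec, hPx, mulVec_sub, mulVec_smul, hQv, dotProduct_sub, sub_dotProduct,
      dotProduct_smul, smul_dotProduct, hvQ, hvc, dotProduct_comm x c, smul_eq_mul]
    rcases eq_or_ne d 0 with hd | hd
    · simp [hd]
    · field_simp; ring
  simpa only [star_trivial, key] using hQ.dotProduct_mulVec_nonneg (x - (s / d) • Pi.single v 1)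

lemma Matrix.PosSemidef.sub_pivotRankOne_apply_left [DecidableEq V] {Q : Matrix V V ℝ}
    (hQ : Q.PosSemidef) (v w : V) : (Q - pivotRankOne Q v) v w = 0 := by
  have hR := hQ.sub_pivotRankOne v
  have hvv : (Q - pivotRankOne Q v) v v = 0 := by
    rw [sub_apply, pivotRankOne_apply]
    rcases eq_or_ne (Q v v) 0 with h | h
    · simp [h]
    · field_simp; ring
  rw [← hR.1.apply, hR.apply_eq_zero_of_diag_eq_zero hvv w, star_zero]

end Pivot

namespace Matrix

variable {V R : Type*}

def IsSupportedOn [Zero R] (M : Matrix V V R) (D : Finset V) : Prop :=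
  ∀ u w, M u w ≠ 0 → u ∈ D ∧ w ∈ D

lemma IsSupportedOn.apply_eq_zero [Zero R] {M : Matrix V V R} {D : Finset V}
    (h : M.IsSupportedOn D) {u w : V} (huw : u ∉ D ∨ w ∉ D) : M u w = 0 := by
  by_contra hne
  obtain ⟨hu, hw⟩ := h u w hne
  tauto

lemma IsSupportedOn.add [AddZeroClass R] {M N : Matrix V V R} {D : Finset V}
    (hM : M.IsSupportedOn D) (hN : N.IsSupportedOn D) : (M + N).IsSupportedOn D := by
  intro u w h
  by_contra huw
  simp only [not_and_or] at huw
  exact h (by simp [hM.apply_eq_zero huw, hN.apply_eq_zero huw])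

def extendByZero [DecidableEq V] [Zero R] (D : Finset V) (Q : Matrix D D R) : Matrix V V R :=
  of fun u w => if h : u ∈ D ∧ w ∈ D then Q ⟨u, h.1⟩ ⟨w, h.2⟩ else 0

lemma isSupportedOn_extendByZero [DecidableEq V] [Zero R] (D : Finset V) (Q : Matrix D D R) :
    (extendByZero D Q).IsSupportedOn D := fun u w h => by
  by_contra huw
  exact h (by simp [extendByZero, huw])

@[simp]
lemma submatrix_extendByZero [DecidableEq V] [Zero R] (D : Finset V) (Q : Matrix D D R) :
    (extendByZero D Q).submatrix (↑) (↑) = Q := by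
  ext u w
  simp [extendByZero]

lemma PosSemidef.extendByZero [DecidableEq V] [Fintype V] {D : Finset V} {Q : Matrix D D ℝ}
    (hQ : Q.PosSemidef) : (Matrix.extendByZero D Q).PosSemidef := by
  -- `extendByZero D Q = Bᵀ Q B` for the selection matrix `B = [u = i]`
  convert hQ.conjTranspose_mul_mul_same
    (of fun (i : D) (u : V) => if (i : V) = u then (1 : ℝ) else 0)
  have hsel : ∀ (f : D → ℝ) (z : V),
      ∑ j : D, (if (j : V) = z then f j else 0) = if hz : z ∈ D then f ⟨z, hz⟩ else 0 := by
    intro f z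
    split_ifs with hz
    · rw [Fintype.sum_eq_single ⟨z, hz⟩ fun j hj => if_neg fun h => hj (Subtype.ext h)]
      simp
    · exact Finset.sum_eq_zero fun j _ => if_neg fun (h : (j : V) = z) => hz (h ▸ j.2)
  ext u w
  simp only [Matrix.extendByZero, mul_apply, conjTranspose_apply, of_apply, star_trivial,
    ite_mul, one_mul, zero_mul, mul_ite, mul_one, mul_zero, hsel]
  by_cases hu : u ∈ D <;> by_cases hw : w ∈ D <;> simp [hu, hw]

end Matrix

section Gram

variable {ι σ R : Type*} [Fintype ι] [CommSemiring R]

/-- The polynomial `(x^β)ᵀ Q x^β = ∑ᵤ ∑ᵥ Qᵤᵥ x^(βᵤ + βᵥ)` with Gram matrix `Q`. -/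
noncomputable def gramPoly (β : ι → σ →₀ ℕ) (Q : Matrix ι ι R) : MvPolynomial σ R :=
  ∑ u, ∑ v, monomial (β u + β v) (Q u v)

lemma gramPoly_sum {κ : Type*} (β : ι → σ →₀ ℕ) (s : Finset κ) (Q : κ → Matrix ι ι R) :
    gramPoly β (∑ k ∈ s, Q k) = ∑ k ∈ s, gramPoly β (Q k) := by
  simp only [gramPoly, Matrix.sum_apply, map_sum]
  exact (Finset.sum_congr rfl fun _ _ => Finset.sum_comm).trans Finset.sum_comm

lemma gramPoly_eq_of_isSupportedOn (β : ι → σ →₀ ℕ) {Q : Matrix ι ι R} {D : Finset ι}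
    (hQ : Q.IsSupportedOn D) :
    gramPoly β Q = gramPoly (fun u : D => β u) (Q.submatrix (↑) (↑)) := by
  have hzero : ∀ u v, u ∉ D ∨ v ∉ D → monomial (β u + β v) (Q u v) = 0 := fun u v huv => by
    rw [hQ.apply_eq_zero huv, map_zero]
  simp only [gramPoly, Matrix.submatrix_apply]
  rw [Finset.sum_coe_sort D (fun u => ∑ v : D, monomial (β u + β v) (Q u v)),
    ← Finset.sum_subset (Finset.subset_univ D) fun u _ hu =>
      Finset.sum_eq_zero fun v _ => hzero u v (.inl hu)]
  refine Finset.sum_congr rfl fun u _ => ?_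
  rw [Finset.sum_coe_sort D (fun v => monomial (β u + β v) (Q u v)),
    ← Finset.sum_subset (Finset.subset_univ D) fun v _ hv => hzero u v (.inr hv)]

end Gram

section Decomposition

variable {V ι : Type*} [Fintype ι]

def IsPosSemidefSumOn (C : ι → Finset V) (Q : Matrix V V ℝ) : Prop :=
  ∃ M : ι → Matrix V V ℝ, (∀ k, (M k).PosSemidef ∧ (M k).IsSupportedOn (C k)) ∧ Q = ∑ k, M k

lemma isPosSemidefSumOn_zero (C : ι → Finset V) : IsPosSemidefSumOn C 0 :=
  ⟨0, fun _ => ⟨.zero, fun _ _ h => absurd rfl h⟩, by simp⟩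

lemma IsPosSemidefSumOn.add {C : ι → Finset V} {R P : Matrix V V ℝ} (hR : IsPosSemidefSumOn C R)
    {k₀ : ι} (hP : P.PosSemidef) (hPk : P.IsSupportedOn (C k₀)) :
    IsPosSemidefSumOn C (R + P) := by
  classical
  obtain ⟨M, hM, rfl⟩ := hR
  refine ⟨M + Pi.single k₀ P, fun k => ?_, ?_⟩
  · rcases eq_or_ne k k₀ with rfl | hk
    · simpa using ⟨(hM k).1.add hP, (hM k).2.add hPk⟩
    · simpa [hk] using hM k
  · simp [Finset.sum_add_distrib]

theorem IsChordal.isPosSemidefSumOn_of_rowSupport [Fintype V] [DecidableEq V]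
    {G : SimpleGraph V} (hG : IsChordal G) (C : ι → Finset V)
    (hC : ∀ D : Finset V, G.IsClique (D : Set V) → ∃ k, D ⊆ C k) (S : Finset V) :
    ∀ Q : Matrix V V ℝ, Q.PosSemidef → (∀ u w, u ∉ S → Q u w = 0) →
      (∀ u w, u ≠ w → ¬ G.Adj u w → Q u w = 0) → IsPosSemidefSumOn C Q := by
  classical
  induction S using Finset.strongInduction with | H S ih =>
  intro Q hQ hS hpat
  rcases S.eq_empty_or_nonempty with rfl | hSne
  · convert isPosSemidefSumOn_zero C
    ext u w
    exact hS u w (Finset.notMem_empty u)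
  -- eliminate a simplicial vertex `v`: its column is supported on the clique `N`
  obtain ⟨v, hvS, hv⟩ := hG.exists_isSimplicial hSne
  set N := insert v (S.filter (G.Adj v))
  have hN : G.IsClique (N : Set V) := by
    rw [Finset.coe_insert, SimpleGraph.isClique_insert, Finset.coe_filter]
    exact ⟨hv, fun u hu _ => hu.2⟩
  have hcol : ∀ u, Q u v ≠ 0 → u ∈ N := by
    intro u hu
    rcases eq_or_ne u v with rfl | huv
    · exact Finset.mem_insert_self _ _
    refine Finset.mem_insert_of_mem (Finset.mem_filter.mpr ⟨?_, ?_⟩)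
    · by_contra huS; exact hu (hS u v huS)
    · by_contra hadj; exact hu (hpat u v huv fun h => hadj h.symm)
  have hP : (pivotRankOne Q v).IsSupportedOn N := by
    intro u w h
    simp only [pivotRankOne_apply, ne_eq, mul_eq_zero, not_or] at h
    exact ⟨hcol u h.2.1, hcol w h.2.2⟩
  obtain ⟨k₀, hk₀⟩ := hC N hN
  rw [← sub_add_cancel Q (pivotRankOne Q v)]
  refine IsPosSemidefSumOn.add (k₀ := k₀) ?_ (posSemidef_pivotRankOne hQ v)
    fun u w h => (hP u w h).imp (@hk₀ u) (@hk₀ w)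
  refine ih _ (Finset.erase_ssubset hvS) _ (hQ.sub_pivotRankOne v) (fun u w hu => ?_)
    fun u w huw hadj => ?_
  · rcases eq_or_ne u v with rfl | huv
    · exact hQ.sub_pivotRankOne_apply_left u w
    have huS : u ∉ S := fun h => hu (Finset.mem_erase.mpr ⟨huv, h⟩)
    simp [pivotRankOne_apply, hS u w huS, hS u v huS]
  · have : pivotRankOne Q v u w = 0 := by
      by_contra h
      exact hadj (hN (hP u w h).1 (hP u w h).2 huw)
    simp [this, hpat u w huw hadj]

end Decomposition

/-- Agler, Helton, McCullough and Rodman. -/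
theorem IsChordal.isPosSemidefSumOn {V ι : Type*} [Fintype V] [DecidableEq V] [Fintype ι]
    {G : SimpleGraph V} (hG : IsChordal G) (C : ι → Finset V)
    (hC : ∀ D : Finset V, G.IsClique (D : Set V) → ∃ k, D ⊆ C k) {Q : Matrix V V ℝ}
    (hQ : Q.PosSemidef) (hpat : ∀ u w, u ≠ w → ¬ G.Adj u w → Q u w = 0) :
    IsPosSemidefSumOn C Q :=
  hG.isPosSemidefSumOn_of_rowSupport C hC Finset.univ Q hQ
    (fun u _ hu => absurd (Finset.mem_univ u) hu) hpat

lemma exists_isMaxClique'_superset {V : Type*} [Finite V] (G : SimpleGraph V) {D : Finset V}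
    (hD : G.IsClique (D : Set V)) : ∃ E, IsMaxClique' G E ∧ D ⊆ E := by
  obtain ⟨E, hDE, hE⟩ :=
    (Set.toFinite {E : Finset V | G.IsClique (E : Set V)}).exists_le_maximal hD
  exact ⟨E, ⟨hE.prop, fun F hF hEF => (hE.eq_of_le hF hEF).symm⟩, hDE⟩

theorem stmt7_general {n r t : ℕ} (β : Fin r → (Fin n →₀ ℕ))
    (G : SimpleGraph (Fin r)) (hG : IsChordal G)
    (C : Fin t → Finset (Fin r))
    (hmax : ∀ k, IsMaxClique' G (C k))
    (hall : ∀ D : Finset (Fin r), IsMaxClique' G D → ∃ k, D = C k)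
    (f : MvPolynomial (Fin n) ℝ) :
    (∃ Q : Matrix (Fin r) (Fin r) ℝ, Q.PosSemidef ∧
        (∀ u v : Fin r, u ≠ v → ¬ G.Adj u v → Q u v = 0) ∧
        f = ∑ u : Fin r, ∑ v : Fin r, MvPolynomial.monomial (β u + β v) (Q u v)) ↔
    (∃ Qk : (k : Fin t) → Matrix ↥(C k) ↥(C k) ℝ,
        (∀ k, (Qk k).PosSemidef) ∧
        f = ∑ k : Fin t, ∑ u : ↥(C k), ∑ v : ↥(C k),
              MvPolynomial.monomial (β u.1 + β v.1) (Qk k u v)) := by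
  have hC : ∀ D : Finset (Fin r), G.IsClique (D : Set (Fin r)) → ∃ k, D ⊆ C k := fun D hD => by
    obtain ⟨E, hE, hDE⟩ := exists_isMaxClique'_superset G hD
    obtain ⟨k, rfl⟩ := hall E hE
    exact ⟨k, hDE⟩
  constructor
  · rintro ⟨Q, hQ, hpat, rfl⟩
    obtain ⟨M, hM, rfl⟩ := hG.isPosSemidefSumOn C hC hQ hpat
    refine ⟨fun k => (M k).submatrix (↑) (↑), fun k => (hM k).1.submatrix _, ?_⟩
    change gramPoly β (∑ k, M k) = ∑ k, gramPoly (fun u : C k => β u) _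
    rw [gramPoly_sum]
    exact Finset.sum_congr rfl fun k _ => gramPoly_eq_of_isSupportedOn β (hM k).2
  · rintro ⟨Qk, hQk, rfl⟩
    refine ⟨∑ k, Matrix.extendByZero (C k) (Qk k),
      Matrix.posSemidef_sum _ fun k _ => (hQk k).extendByZero, fun u w huw hadj => ?_, ?_⟩
    · refine (Matrix.sum_apply u w _ _).trans (Finset.sum_eq_zero fun k _ => ?_)
      by_contra h
      obtain ⟨hu, hw⟩ := Matrix.isSupportedOn_extendByZero (C k) (Qk k) u w h
      exact hadj ((hmax k).1 hu hw huw)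
    · change _ = gramPoly β _
      rw [gramPoly_sum]
      refine Finset.sum_congr rfl fun k _ => ?_
      rw [gramPoly_eq_of_isSupportedOn β (Matrix.isSupportedOn_extendByZero _ _),
        Matrix.submatrix_extendByZero]
      rfl

/-- Sparse SOS decomposition (Theorem 3.3 of Wang–Magron–Lasserre): for a monomial basis
`B = {β_1,…,β_r}` and a chordal term sparsity pattern graph `Ḡ` with maximal cliques
`C_1,…,C_t`, a polynomial `f` has a PSD Gram matrix with sparsity pattern `Ḡ` iff it is a
sum `f = Σ_k (x^{B_k})ᵀ Q_k x^{B_k}` with `Q_k ⪰ 0` indexed by the cliques. -/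
theorem stmt7 {n r t : ℕ} (β : Fin r → (Fin n →₀ ℕ)) (hβ : Function.Injective β)
    (G : SimpleGraph (Fin r)) (hG : IsChordal G)
    (C : Fin t → Finset (Fin r))
    (hmax : ∀ k, IsMaxClique' G (C k))
    (hall : ∀ D : Finset (Fin r), IsMaxClique' G D → ∃ k, D = C k)
    (f : MvPolynomial (Fin n) ℝ) :
    (∃ Q : Matrix (Fin r) (Fin r) ℝ, Q.PosSemidef ∧
        (∀ u v : Fin r, u ≠ v → ¬ G.Adj u v → Q u v = 0) ∧
        f = ∑ u : Fin r, ∑ v : Fin r, MvPolynomial.monomial (β u + β v) (Q u v)) ↔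
    (∃ Qk : (k : Fin t) → Matrix ↥(C k) ↥(C k) ℝ,
        (∀ k, (Qk k).PosSemidef) ∧
        f = ∑ k : Fin t, ∑ u : ↥(C k), ∑ v : ↥(C k),
              MvPolynomial.monomial (β u.1 + β v.1) (Qk k u v)) :=
  stmt7_general β G hG C hmax hall f
end
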